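/- For all integers h ≥ 1 and k ≥ 1, the closure C⟨h,k⟩ of the complete k-ary tree of depth h has treedepth exactly h. -/

import Mathlib

/-- Vertices of the complete `k`-ary tree of depth `h`: sequences over `Fin k`
of length `< h` (the root is the empty sequence). -/
def CVert (h k : ℕ) : Type := {l : List (Fin k) // l.length < h}

/-- `C⟨h,k⟩`, the closure of the complete `k`-ary tree of depth `h`:
two vertices are adjacent iff one is a strict ancestor (proper prefix)
of the other. -/
def Cgraph (h k : ℕ) : SimpleGraph (CVert h k) where
  Adj a b := a ≠ b ∧ (a.1 <+: b.1 ∨ b.1 <+: a.1)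
  symm := ⟨fun _ _ ⟨hne, hp⟩ => ⟨hne.symm, hp.symm⟩⟩
  loopless := ⟨fun _ ⟨hne, _⟩ => hne rfl⟩

/-- A rooted tree on vertex set `V`, encoded by its ancestor order:
a partial order with a minimum element (the root) in which the set of
ancestors of any vertex is a chain. -/
structure TreeOrder (V : Type*) where
  le : V → V → Prop
  refl : ∀ v, le v v
  antisymm : ∀ u v, le u v → le v u → u = v
  trans : ∀ u v w, le u v → le v w → le u w
  root : V
  root_le : ∀ v, le root v
  downChain : ∀ u v w, le u w → le v w → le u v ∨ le v u

/-- The (connected) graph `G` has treedepth at most `d`: there is a rooted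
tree on `V(G)` of depth at most `d` whose closure contains `G`. -/
def treedepthLE {V : Type*} (G : SimpleGraph V) (d : ℕ) : Prop :=
  ∃ T : TreeOrder V,
    (∀ s : Finset V, (∀ u ∈ s, ∀ v ∈ s, T.le u v ∨ T.le v u) → s.card ≤ d) ∧
    ∀ u v, G.Adj u v → T.le u v ∨ T.le v u

/-!
Ordering the vertices of `C⟨h,k⟩` by the prefix relation is a tree order whose chains have
pairwise distinct lengths `< h`, so the tree itself witnesses treedepth `≤ h`. Conversely, in any
tree order whose closure contains a graph, a clique is a chain; the root-to-leaf path
`[], [0], [0,0], …` is a clique on `h` vertices, so the depth is at least `h`.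
-/

theorem List.replicate_prefix_replicate {α : Type*} (a : α) {m n : ℕ} (hmn : m ≤ n) :
    List.replicate m a <+: List.replicate n a :=
  ⟨List.replicate (n - m) a, by rw [← List.replicate_add, Nat.add_sub_cancel' hmn]⟩

theorem treedepthLE.card_le_of_isNClique {V : Type*} {G : SimpleGraph V} {d n : ℕ}
    {s : Finset V} (htd : treedepthLE G d) (hs : G.IsNClique n s) : n ≤ d := by
  obtain ⟨T, hchain, hadj⟩ := htd
  rw [← hs.card_eq]
  refine hchain s fun u hu v hv => ?_
  rcases eq_or_ne u v with rfl | hne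
  · exact .inl (T.refl u)
  · exact hadj u v (hs.isClique hu hv hne)

namespace CVert

def prefixTreeOrder (h k : ℕ) (hh : 1 ≤ h) : TreeOrder (CVert h k) where
  le a b := a.1 <+: b.1
  refl _ := List.prefix_refl _
  antisymm _ _ huv hvu := Subtype.ext (huv.eq_of_length (huv.length_le.antisymm hvu.length_le))
  trans _ _ _ := List.IsPrefix.trans
  root := ⟨[], hh⟩
  root_le _ := List.nil_prefix
  downChain _ _ _ := List.prefix_or_prefix_of_prefix

theorem card_le_of_prefix_chain {h k : ℕ} (s : Finset (CVert h k))
    (hchain : ∀ u ∈ s, ∀ v ∈ s, u.1 <+: v.1 ∨ v.1 <+: u.1) : s.card ≤ h := by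
  simpa using Finset.card_le_card_of_injOn (fun v : CVert h k => v.1.length)
    (fun v _ => Finset.mem_coe.2 (Finset.mem_range.2 v.2))
    (fun u hu v hv huv => Subtype.ext <| (hchain u hu v hv).elim
      (fun p => p.eq_of_length huv) (fun p => (p.eq_of_length huv.symm).symm))

def spine (h : ℕ) {k : ℕ} (z : Fin k) : Fin h ↪ CVert h k where
  toFun i := ⟨List.replicate i z, by simp⟩
  inj' i j hij := Fin.ext (by simpa using congrArg (fun v : CVert h k => v.1.length) hij)

theorem isNClique_spine (h : ℕ) {k : ℕ} (z : Fin k) :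
    (Cgraph h k).IsNClique h (Finset.univ.map (spine h z)) := by
  refine ⟨?_, by simp⟩
  intro u hu v hv hne
  obtain ⟨i, -, rfl⟩ := Finset.mem_map.1 hu
  obtain ⟨j, -, rfl⟩ := Finset.mem_map.1 hv
  refine ⟨hne, (le_total (i : ℕ) j).imp ?_ ?_⟩ <;> exact List.replicate_prefix_replicate z

end CVert

theorem stmt5 (h k : ℕ) (hh : 1 ≤ h) (hk : 1 ≤ k) :
    treedepthLE (Cgraph h k) h ∧ ∀ d : ℕ, d < h → ¬ treedepthLE (Cgraph h k) d := by
  refine ⟨⟨CVert.prefixTreeOrder h k hh, CVert.card_le_of_prefix_chain, fun _ _ hadj => hadj.2⟩,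
    fun d hd htd => ?_⟩
  exact hd.not_ge (htd.card_le_of_isNClique (CVert.isNClique_spine h (⟨0, hk⟩ : Fin k)))
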